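/- Suppose B ∈ Γ(X; A²_X ⊗ J_X) satisfies ∇^can B̄ = 0, where B̄ is the image of B in Γ(X; A²_X ⊗ J_X/O_X). Then: (1) the jet de Rham differential d̂_dR applied to B yields a degree-three cocycle d̂_dR B in Γ(X; DR(Ω̂•_{J/O})); and (2) there exists a unique H ∈ Γ(X; A³_X) such that dH = 0 and DR(1)(H) = ∇^can B. -/

import Mathlib

open CategoryTheory

noncomputable section

/-! ## Jets of differential forms and the jet de Rham complex

`JetDeRhamTheory` bundles the background of Section 5.4 of the paper: on a smooth
manifold `X`, with `J_X` the sheaf of infinite jets of functions and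
`Ω̂^l_{J/O} := J_X(A^l_X)` the sheaf of jets of differential `l`-forms:
the sections `AOm k l = Γ(X; A^k_X ⊗ Ω̂^l_{J/O})` (so `AOm k 0 = Γ(X; A^k_X ⊗ J_X)`),
the sections `AJO k = Γ(X; A^k_X ⊗ J_X/O_X)` with the projection `proj`, the canonical
flat connection `∇^can` (denoted `nabla`), the `O_X`-linear jet de Rham differential
`d̂_dR` (denoted `dR`) induced by the de Rham differential and horizontal for `∇^can`,
the scalar forms `Γ(X; A^k_X)` with the de Rham differential `d`, and the unit map
`1 : O_X → J_X`, inducing `DR(1) : A^k_X → A^k_X ⊗ J_X` (denoted `unit`), which is an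
isomorphism onto the kernel of `d̂_dR : J_X → Ω̂¹_{J/O}` — equivalently, onto the kernel
of the projection to `J_X/O_X`. -/
structure JetDeRhamTheory : Type 1 where
  /-- the underlying smooth manifold, through its topological space -/
  X : Type
  [topX : TopologicalSpace X]
  /-- `Γ(X; A^k_X ⊗ Ω̂^l_{J/O})`; for `l = 0`, `Γ(X; A^k_X ⊗ J_X)` -/
  AOm : ℕ → ℕ → Type
  [aomAcg : ∀ k l, AddCommGroup (AOm k l)]
  [aomMod : ∀ k l, Module ℂ (AOm k l)]
  /-- `Γ(X; A^k_X ⊗ J_X/O_X)` -/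
  AJO : ℕ → Type
  [ajoAcg : ∀ k, AddCommGroup (AJO k)]
  [ajoMod : ∀ k, Module ℂ (AJO k)]
  /-- scalar differential forms `Γ(X; A^k_X)` -/
  Forms : ℕ → Type
  [formsAcg : ∀ k, AddCommGroup (Forms k)]
  [formsMod : ∀ k, Module ℂ (Forms k)]
  /-- the canonical flat connection `∇^can` -/
  nabla : ∀ k l, AOm k l →ₗ[ℂ] AOm (k + 1) l
  /-- the canonical flat connection `∇^can` on `A^•_X ⊗ J_X/O_X` -/
  nablaJO : ∀ k, AJO k →ₗ[ℂ] AJO (k + 1)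
  /-- the jet de Rham differential `d̂_dR` -/
  dR : ∀ k l, AOm k l →ₗ[ℂ] AOm k (l + 1)
  /-- the projection `A^k_X ⊗ J_X → A^k_X ⊗ J_X/O_X` -/
  proj : ∀ k, AOm k 0 →ₗ[ℂ] AJO k
  /-- the de Rham differential on scalar forms -/
  d : ∀ k, Forms k →ₗ[ℂ] Forms (k + 1)
  /-- the map `DR(1) : A^k_X → A^k_X ⊗ J_X` induced by the unit `1 : O_X → J_X` -/
  unit : ∀ k, Forms k →ₗ[ℂ] AOm k 0
  /-- `∇^can` is flat -/
  nabla_nabla : ∀ k l (x : AOm k l), nabla (k + 1) l (nabla k l x) = 0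
  /-- `d̂_dR` squares to zero -/
  dR_dR : ∀ k l (x : AOm k l), dR k (l + 1) (dR k l x) = 0
  /-- `d̂_dR` is horizontal with respect to `∇^can` -/
  nabla_dR : ∀ k l (x : AOm k l), nabla k (l + 1) (dR k l x) = dR (k + 1) l (nabla k l x)
  /-- the projection intertwines the connections -/
  proj_nabla : ∀ k (x : AOm k 0), proj (k + 1) (nabla k 0 x) = nablaJO k (proj k x)
  /-- the de Rham differential squares to zero -/
  dd : ∀ k (a : Forms k), d (k + 1) (d k a) = 0
  /-- `DR(1)` is injective -/
  unit_inj : ∀ k, Function.Injective (unit k)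
  /-- `1` is horizontal: `∇^can ∘ DR(1) = DR(1) ∘ d` -/
  nabla_unit : ∀ k (a : Forms k), nabla k 0 (unit k a) = unit (k + 1) (d k a)
  /-- `1` is an isomorphism onto the kernel of `d̂_dR : J_X → Ω̂¹_{J/O}` -/
  ker_dR : ∀ k (x : AOm k 0), dR k 0 x = 0 ↔ ∃ a, unit k a = x
  /-- the kernel of the projection to `J_X/O_X` is the image of `1` -/
  ker_proj : ∀ k (x : AOm k 0), proj k x = 0 ↔ ∃ a, unit k a = x

attribute [instance] JetDeRhamTheory.topX JetDeRhamTheory.aomAcg JetDeRhamTheory.aomMod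
  JetDeRhamTheory.ajoAcg JetDeRhamTheory.ajoMod JetDeRhamTheory.formsAcg
  JetDeRhamTheory.formsMod

namespace JetDeRhamTheory

variable (T : JetDeRhamTheory) {k : ℕ} {x : T.AOm k 0}

theorem exists_unit_eq_nabla (hx : T.nablaJO k (T.proj k x) = 0) :
    ∃ a, T.unit (k + 1) a = T.nabla k 0 x :=
  (T.ker_proj _ _).mp (by rw [T.proj_nabla, hx])

theorem d_eq_zero_of_unit_eq_nabla {a : T.Forms (k + 1)}
    (ha : T.unit (k + 1) a = T.nabla k 0 x) : T.d (k + 1) a = 0 :=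
  T.unit_inj _ <| by rw [map_zero, ← T.nabla_unit, ha, T.nabla_nabla]

theorem nabla_dR_eq_zero (hx : T.nablaJO k (T.proj k x) = 0) :
    T.nabla k 1 (T.dR k 0 x) = 0 := by
  rw [T.nabla_dR, (T.ker_dR _ _).mpr (T.exists_unit_eq_nabla hx)]

end JetDeRhamTheory

/-- **Lemma 5.4 of the paper**: suppose `B ∈ Γ(X; A²_X ⊗ J_X)` satisfies
`∇^can B̄ = 0`, where `B̄` is the image of `B` in `Γ(X; A²_X ⊗ J_X/O_X)`.  Then:
(1) `d̂_dR B` is a degree-three cocycle in `Γ(X; DR(Ω̂^•_{J/O}))`, i.e. both components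
of the total differential `(∇^can, Id ⊗ d̂_dR)` vanish on it; and
(2) there exists a unique `H ∈ Γ(X; A³_X)` such that `dH = 0` and `DR(1)(H) = ∇^can B`. -/
theorem jet_cocycle_and_unique_H (T : JetDeRhamTheory) (B : T.AOm 2 0)
    (hB : T.nablaJO 2 (T.proj 2 B) = 0) :
    (T.dR 2 1 (T.dR 2 0 B) = 0 ∧ T.nabla 2 1 (T.dR 2 0 B) = 0) ∧
    (∃! H : T.Forms 3, T.d 3 H = 0 ∧ T.unit 3 H = T.nabla 2 0 B) := by
  obtain ⟨H, hH⟩ := T.exists_unit_eq_nabla hB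
  refine ⟨⟨T.dR_dR 2 0 B, T.nabla_dR_eq_zero hB⟩, H, ⟨T.d_eq_zero_of_unit_eq_nabla hH, hH⟩,
    fun H' ⟨_, hH'⟩ => T.unit_inj 3 (hH'.trans hH.symm)⟩

end
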